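/- Soundness of local instantiations: let ψ(x̄) = ∃ȳ. φ(x̄, ȳ) with φ quantifier-free over Σ, let t̄ be a tuple of constants of the vocabulary, and let δ̂ be obtained from the transition relation δ (viewed as a sentence over Σ̂ ⊎ Σ̂') by conjoining the constraint ∃c̄. (r(t̄) → φ(t̄, c̄)) with fresh existentially quantified variables c̄ (a local instantiation of r at t̄). Then δ̂ is a sound instrumentation for δ and ψ; indeed ((∀x̄. r(x̄) ↔ ψ(x̄)) ∧ δ) → δ̂ is valid, and hence δ → δ̂[ψ/r, ψ'/r'] is valid. -/

import Mathlib

namespace BH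

/-- A first-order signature: function symbols (the 0-ary ones are the constants)
and relation symbols, each with an arity. -/
structure Sig where
  Func : Type
  funcArity : Func → ℕ
  Rel : Type
  relArity : Rel → ℕ

/-- A relational vocabulary: no proper function symbols,
i.e. every function symbol is a constant. -/
def Sig.Relational (S : Sig) : Prop := ∀ f, S.funcArity f = 0

/-- The two-vocabulary signature `Σ ⊎ Σ'`; `(s, false)` is the unprimed copy of the
symbol `s` and `(s, true)` is its primed copy. -/
def Sig.double (S : Sig) : Sig where
  Func := S.Func × Bool
  funcArity := fun p => S.funcArity p.1
  Rel := S.Rel × Bool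
  relArity := fun p => S.relArity p.1

/-- `Σ̂ = Σ ∪ {r}` where `r` (represented by `none`) is a fresh `a`-ary relation symbol. -/
def Sig.addRel (S : Sig) (a : ℕ) : Sig where
  Func := S.Func
  funcArity := S.funcArity
  Rel := Option S.Rel
  relArity := fun r => Option.elim r a S.relArity

/-- `Σ` extended with countably many fresh Skolem function symbols:
`(i, n)` is the `i`-th Skolem symbol, of arity `n`. -/
def Sig.skolemize (S : Sig) : Sig where
  Func := S.Func ⊕ (ℕ × ℕ)
  funcArity := Sum.elim S.funcArity Prod.snd
  Rel := S.Rel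
  relArity := S.relArity

/-- First-order terms over `S`, with variables indexed by `ℕ`. -/
inductive Term (S : Sig) : Type
  | var : ℕ → Term S
  | app : (f : S.Func) → (Fin (S.funcArity f) → Term S) → Term S

/-- First-order formulas (with equality) over `S`. -/
inductive Formula (S : Sig) : Type
  | rel : (r : S.Rel) → (Fin (S.relArity r) → Term S) → Formula S
  | eq : Term S → Term S → Formula S
  | fls : Formula S
  | not : Formula S → Formula S
  | and : Formula S → Formula S → Formula S
  | or : Formula S → Formula S → Formula S
  | all : ℕ → Formula S → Formula S
  | ex : ℕ → Formula S → Formula S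

variable {S : Sig}

def Formula.imp (φ ψ : Formula S) : Formula S := .or (.not φ) ψ

def Formula.iff (φ ψ : Formula S) : Formula S := .and (φ.imp ψ) (ψ.imp φ)

/-- A structure (model) for the signature `S`: a nonempty domain together with
interpretations of the function and relation symbols. -/
structure Struc (S : Sig) where
  Dom : Type
  [dom_nonempty : Nonempty Dom]
  interpFunc : (f : S.Func) → (Fin (S.funcArity f) → Dom) → Dom
  interpRel : (r : S.Rel) → (Fin (S.relArity r) → Dom) → Prop

attribute [instance] Struc.dom_nonempty

def Term.eval (A : Struc S) (v : ℕ → A.Dom) : Term S → A.Dom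
  | .var n => v n
  | .app f ts => A.interpFunc f fun i => Term.eval A v (ts i)

/-- Tarskian satisfaction. -/
def Formula.Realize (A : Struc S) (v : ℕ → A.Dom) : Formula S → Prop
  | .rel r ts => A.interpRel r fun i => (ts i).eval A v
  | .eq t u => t.eval A v = u.eval A v
  | .fls => False
  | .not φ => ¬ Formula.Realize A v φ
  | .and φ ψ => Formula.Realize A v φ ∧ Formula.Realize A v ψ
  | .or φ ψ => Formula.Realize A v φ ∨ Formula.Realize A v ψ
  | .all x φ => ∀ d : A.Dom, Formula.Realize A (Function.update v x d) φ
  | .ex x φ => ∃ d : A.Dom, Formula.Realize A (Function.update v x d) φ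

def Term.fvars : Term S → Set ℕ
  | .var n => {n}
  | .app _ ts => ⋃ i, Term.fvars (ts i)

def Formula.fvars : Formula S → Set ℕ
  | .rel _ ts => ⋃ i, (ts i).fvars
  | .eq t u => t.fvars ∪ u.fvars
  | .fls => ∅
  | .not φ => Formula.fvars φ
  | .and φ ψ => Formula.fvars φ ∪ Formula.fvars ψ
  | .or φ ψ => Formula.fvars φ ∪ Formula.fvars ψ
  | .all x φ => Formula.fvars φ \ {x}
  | .ex x φ => Formula.fvars φ \ {x}

/-- A sentence is a closed formula. -/
def Formula.IsSentence (φ : Formula S) : Prop := φ.fvars = ∅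

/-- Validity over all (finite and infinite) structures. -/
def Valid (φ : Formula S) : Prop := ∀ (A : Struc S) (v : ℕ → A.Dom), φ.Realize A v

def Satisfiable (φ : Formula S) : Prop := ∃ (A : Struc S) (v : ℕ → A.Dom), φ.Realize A v

def SetSatisfiable (Γ : Set (Formula S)) : Prop :=
  ∃ (A : Struc S) (v : ℕ → A.Dom), ∀ φ ∈ Γ, φ.Realize A v

/-- Quantifier-free formulas. -/
inductive Formula.IsQF : Formula S → Prop
  | rel : ∀ r ts, IsQF (.rel r ts)
  | eq : ∀ t u, IsQF (.eq t u)
  | fls : IsQF .fls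
  | not : ∀ {φ}, IsQF φ → IsQF (.not φ)
  | and : ∀ {φ ψ}, IsQF φ → IsQF ψ → IsQF (.and φ ψ)
  | or : ∀ {φ ψ}, IsQF φ → IsQF ψ → IsQF (.or φ ψ)

/-- Universal (`∀*` prenex) formulas. -/
inductive Formula.IsUniversal : Formula S → Prop
  | of_qf : ∀ {φ}, Formula.IsQF φ → IsUniversal φ
  | all : ∀ (x) {φ}, IsUniversal φ → IsUniversal (.all x φ)

/-- Existential (`∃*` prenex) formulas. -/
inductive Formula.IsExistential : Formula S → Prop
  | of_qf : ∀ {φ}, Formula.IsQF φ → IsExistential φ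
  | ex : ∀ (x) {φ}, IsExistential φ → IsExistential (.ex x φ)

/-- `∃*∀*` prenex formulas (the EPR class, over a relational signature). -/
inductive Formula.IsEA : Formula S → Prop
  | of_universal : ∀ {φ}, Formula.IsUniversal φ → IsEA φ
  | ex : ∀ (x) {φ}, IsEA φ → IsEA (.ex x φ)

/-- `∀*∃*` prenex formulas. -/
inductive Formula.IsAE : Formula S → Prop
  | of_existential : ∀ {φ}, Formula.IsExistential φ → IsAE φ
  | all : ∀ (x) {φ}, IsAE φ → IsAE (.all x φ)

/-- Alternation-free formulas: Boolean combinations of universal and existential formulas. -/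
inductive Formula.IsAF : Formula S → Prop
  | of_universal : ∀ {φ}, Formula.IsUniversal φ → IsAF φ
  | of_existential : ∀ {φ}, Formula.IsExistential φ → IsAF φ
  | not : ∀ {φ}, IsAF φ → IsAF (.not φ)
  | and : ∀ {φ ψ}, IsAF φ → IsAF ψ → IsAF (.and φ ψ)
  | or : ∀ {φ ψ}, IsAF φ → IsAF ψ → IsAF (.or φ ψ)

/-- Embed a term over `Σ` as a term over `Σ ⊎ Σ'` using the copy indicated by `b`
(`false` = unprimed, `true` = primed). -/
def Term.toDouble (b : Bool) : Term S → Term S.double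
  | .var n => .var n
  | .app f ts => .app (f, b) fun i => Term.toDouble b (ts i)

/-- Embed a formula over `Σ` as a formula over `Σ ⊎ Σ'` using the copy indicated by `b`;
`φ.toDouble true` is the primed copy `φ'`. -/
def Formula.toDouble (b : Bool) : Formula S → Formula S.double
  | .rel r ts => .rel (r, b) fun i => (ts i).toDouble b
  | .eq t u => .eq (t.toDouble b) (u.toDouble b)
  | .fls => .fls
  | .not φ => .not (Formula.toDouble b φ)
  | .and φ ψ => .and (Formula.toDouble b φ) (Formula.toDouble b ψ)
  | .or φ ψ => .or (Formula.toDouble b φ) (Formula.toDouble b ψ)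
  | .all x φ => .all x (Formula.toDouble b φ)
  | .ex x φ => .ex x (Formula.toDouble b φ)

/-- `I` is an inductive invariant for the transition relation `δ` iff `I ∧ δ → I'`
is valid over all (finite and infinite) structures. -/
def InductiveInvariant (δ : Formula S.double) (I : Formula S) : Prop :=
  Valid (Formula.imp (Formula.and (I.toDouble false) δ) (I.toDouble true))

/-- `I` is an inductive invariant for `δ` over finite structures iff `I ∧ δ → I'`
is valid over all finite structures. -/
def InductiveInvariantFin (δ : Formula S.double) (I : Formula S) : Prop :=
  ∀ (A : Struc S.double), Finite A.Dom → ∀ v : ℕ → A.Dom,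
    (Formula.imp (Formula.and (I.toDouble false) δ) (I.toDouble true)).Realize A v

def Term.substEnv (σ : ℕ → Term S) : Term S → Term S
  | .var n => σ n
  | .app f ts => .app f fun i => Term.substEnv σ (ts i)

/-- Capture-naive simultaneous substitution of terms for free variables. -/
def Formula.substEnv (σ : ℕ → Term S) : Formula S → Formula S
  | .rel r ts => .rel r fun i => (ts i).substEnv σ
  | .eq t u => .eq (t.substEnv σ) (u.substEnv σ)
  | .fls => .fls
  | .not φ => .not (Formula.substEnv σ φ)
  | .and φ ψ => .and (Formula.substEnv σ φ) (Formula.substEnv σ ψ)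
  | .or φ ψ => .or (Formula.substEnv σ φ) (Formula.substEnv σ ψ)
  | .all x φ => .all x (Formula.substEnv (Function.update σ x (.var x)) φ)
  | .ex x φ => .ex x (Formula.substEnv (Function.update σ x (.var x)) φ)

/-- Substitution of the term `t` for the variable `x`. -/
def Formula.substVar (x : ℕ) (t : Term S) (φ : Formula S) : Formula S :=
  φ.substEnv (Function.update Term.var x t)

mutual
  /-- Negation normal form. -/
  def Formula.nnf : Formula S → Formula S
    | .rel r ts => .rel r ts
    | .eq t u => .eq t u
    | .fls => .fls
    | .not φ => Formula.nnfNeg φ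
    | .and φ ψ => .and (Formula.nnf φ) (Formula.nnf ψ)
    | .or φ ψ => .or (Formula.nnf φ) (Formula.nnf ψ)
    | .all x φ => .all x (Formula.nnf φ)
    | .ex x φ => .ex x (Formula.nnf φ)

  /-- Negation normal form of the negation of a formula. -/
  def Formula.nnfNeg : Formula S → Formula S
    | .rel r ts => .not (.rel r ts)
    | .eq t u => .not (.eq t u)
    | .fls => .not .fls
    | .not φ => Formula.nnf φ
    | .and φ ψ => .or (Formula.nnfNeg φ) (Formula.nnfNeg ψ)
    | .or φ ψ => .and (Formula.nnfNeg φ) (Formula.nnfNeg ψ)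
    | .all x φ => .ex x (Formula.nnfNeg φ)
    | .ex x φ => .all x (Formula.nnfNeg φ)
end

/-- Embed a term over `Σ` into the Skolem-extended signature, while substituting
terms of the extended signature for its variables. -/
def Term.substSk (σ : ℕ → Term S.skolemize) : Term S → Term S.skolemize
  | .var n => σ n
  | .app f ts => .app (Sum.inl f) fun i => Term.substSk σ (ts i)

/-- The Skolemization worker.  `skolemAux φ c u env` Skolemizes the (NNF) formula `φ`,
where `c` is the index of the next fresh Skolem symbol, `u` is the list of universally
quantified variables currently in scope, and `env` maps each existentially quantified
variable in scope to its Skolem term (and every other variable to itself).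
It returns the Skolemized formula together with the next fresh Skolem index. -/
def skolemAux : Formula S → ℕ → List ℕ → (ℕ → Term S.skolemize) → Formula S.skolemize × ℕ
  | .rel r ts, c, _, env => (.rel r fun i => (ts i).substSk env, c)
  | .eq t u, c, _, env => (.eq (t.substSk env) (u.substSk env), c)
  | .fls, c, _, _ => (.fls, c)
  | .not φ, c, u, env =>
      let p := skolemAux φ c u env
      (.not p.1, p.2)
  | .and φ ψ, c, u, env =>
      let p := skolemAux φ c u env
      let q := skolemAux ψ p.2 u env
      (.and p.1 q.1, q.2)
  | .or φ ψ, c, u, env =>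
      let p := skolemAux φ c u env
      let q := skolemAux ψ p.2 u env
      (.or p.1 q.1, q.2)
  | .all x φ, c, u, env =>
      let p := skolemAux φ c (u ++ [x]) (Function.update env x (.var x))
      (.all x p.1, p.2)
  | .ex y φ, c, u, env =>
      skolemAux φ (c + 1) u
        (Function.update env y (.app (Sum.inr (c, u.length)) fun i => .var (u.get i)))

/-- Skolemization of `φ`, using fresh Skolem symbols starting from index `c`:
the universal formula over the Skolem-extended signature obtained from the negation
normal form of `φ` by replacing each existentially quantified variable by a fresh Skolem
function applied to the universally quantified variables in whose scope it lies. -/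
def Formula.skFrom (c : ℕ) (φ : Formula S) : Formula S.skolemize :=
  (skolemAux φ.nnf c [] Term.var).1

/-- The next fresh Skolem index after Skolemizing `φ` starting from index `c`. -/
def Formula.skCounter (c : ℕ) (φ : Formula S) : ℕ :=
  (skolemAux φ.nnf c [] Term.var).2

/-- Skolemization `Sk(φ)` of `φ`. -/
def Formula.sk (φ : Formula S) : Formula S.skolemize := φ.skFrom 0

def Term.IsGround : Term S → Prop
  | .var _ => False
  | .app _ ts => ∀ i, Term.IsGround (ts i)

/-- Function-nesting depth of a term: constants have depth 0. -/
def Term.depth : Term S → ℕ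
  | .var _ => 0
  | .app _ ts => Finset.univ.sup fun i => Term.depth (ts i) + 1

/-- The maximal depth of a term occurring in a formula; for an instantiation `φ[t̄]`
(a ground formula) this is the least `k` such that every ground term occurring in it
lies in `Terms_k`. -/
def Formula.tDepth : Formula S → ℕ
  | .rel _ ts => Finset.univ.sup fun i => (ts i).depth
  | .eq t u => max t.depth u.depth
  | .fls => 0
  | .not φ => Formula.tDepth φ
  | .and φ ψ => max (Formula.tDepth φ) (Formula.tDepth ψ)
  | .or φ ψ => max (Formula.tDepth φ) (Formula.tDepth ψ)
  | .all _ φ => Formula.tDepth φ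
  | .ex _ φ => Formula.tDepth φ

/-- `BInst k φ χ` holds iff `χ` is an instantiation `φ[t̄]` of the universal formula `φ`
by a tuple `t̄` of ground terms of depth at most `k` (`t̄ ∈ Terms_k`): each universally
quantified variable is replaced by a ground term and the quantifier is removed. -/
inductive BInst (k : ℕ) : Formula S → Formula S → Prop
  | rel : ∀ r ts, BInst k (.rel r ts) (.rel r ts)
  | eq : ∀ t u, BInst k (.eq t u) (.eq t u)
  | fls : BInst k .fls .fls
  | not : ∀ {φ χ}, BInst k φ χ → BInst k (.not φ) (.not χ)
  | and : ∀ {φ₁ φ₂ χ₁ χ₂}, BInst k φ₁ χ₁ → BInst k φ₂ χ₂ →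
      BInst k (.and φ₁ φ₂) (.and χ₁ χ₂)
  | or : ∀ {φ₁ φ₂ χ₁ χ₂}, BInst k φ₁ χ₁ → BInst k φ₂ χ₂ →
      BInst k (.or φ₁ φ₂) (.or χ₁ χ₂)
  | all : ∀ (x) {φ χ} (t : Term S), t.IsGround → t.depth ≤ k →
      BInst k (φ.substVar x t) χ → BInst k (.all x φ) χ

/-- `Ind = Sk(I) ∧ Sk(δ) ∧ Sk(¬I')`, with fresh Skolem symbols for each conjunct. -/
def IndOf (I : Formula S) (δ : Formula S.double) : Formula S.double.skolemize :=
  Formula.and (Formula.skFrom 0 (I.toDouble false))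
    (Formula.and
      (Formula.skFrom (Formula.skCounter 0 (I.toDouble false)) δ)
      (Formula.skFrom (Formula.skCounter (Formula.skCounter 0 (I.toDouble false)) δ)
        (Formula.not (I.toDouble true))))

/-- The set `{ Ind[t̄] : t̄ ∈ Terms_k, depth(Ind[t̄]) ≤ k }` of Bounded-Horizon
instantiations of bound `k`. -/
def BHSet {T : Sig} (k : ℕ) (Ind : Formula T) : Set (Formula T) :=
  { χ | BInst k Ind χ ∧ χ.tDepth ≤ k }

/-- `I` is provably inductive w.r.t. `δ` with Bounded-Horizon of bound `k`:
the set of instantiations of `Ind = Sk(I) ∧ Sk(δ) ∧ Sk(¬I')` by tuples of ground terms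
of depth at most `k` is unsatisfiable. -/
def ProvablyInductiveBH (I : Formula S) (δ : Formula S.double) (k : ℕ) : Prop :=
  ¬ SetSatisfiable (BHSet k (IndOf I δ))

def Formula.allList : List ℕ → Formula S → Formula S
  | [], φ => φ
  | x :: xs, φ => .all x (Formula.allList xs φ)

def Formula.exList : List ℕ → Formula S → Formula S
  | [], φ => φ
  | x :: xs, φ => .ex x (Formula.exList xs φ)

/-- The existential prefix of a formula: the list of outermost existentially
quantified variables, together with the matrix. -/
def Formula.exPrefix : Formula S → List ℕ × Formula S
  | .ex x φ => ((x :: (Formula.exPrefix φ).1 : List ℕ), (Formula.exPrefix φ).2)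
  | φ => ([], φ)

def Term.funcSyms : Term S → Set S.Func
  | .var _ => ∅
  | .app f ts => insert f (⋃ i, Term.funcSyms (ts i))

def Formula.funcSyms : Formula S → Set S.Func
  | .rel _ ts => ⋃ i, (ts i).funcSyms
  | .eq t u => t.funcSyms ∪ u.funcSyms
  | .fls => ∅
  | .not φ => Formula.funcSyms φ
  | .and φ ψ => Formula.funcSyms φ ∪ Formula.funcSyms ψ
  | .or φ ψ => Formula.funcSyms φ ∪ Formula.funcSyms ψ
  | .all _ φ => Formula.funcSyms φ
  | .ex _ φ => Formula.funcSyms φ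

/-- The set of constants (0-ary function symbols) occurring in a formula. -/
def Formula.constSyms (φ : Formula S) : Set S.Func :=
  { f ∈ φ.funcSyms | S.funcArity f = 0 }

/-- The closed term consisting of the constant symbol `f`. -/
def constTerm (f : S.Func) (h : S.funcArity f = 0) : Term S :=
  .app f fun i => (Fin.cast h i).elim0

/-- `t` is (the term of) a constant symbol belonging to `Cs`. -/
def IsConstTermOf (Cs : Set S.Func) (t : Term S) : Prop :=
  ∃ (f : S.Func) (h : S.funcArity f = 0), f ∈ Cs ∧ t = constTerm f h

/-- The number of existential quantifiers of a formula. -/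
def Formula.countEx : Formula S → ℕ
  | .ex _ φ => Formula.countEx φ + 1
  | .all _ φ => Formula.countEx φ
  | .not φ => Formula.countEx φ
  | .and φ ψ => Formula.countEx φ + Formula.countEx ψ
  | .or φ ψ => Formula.countEx φ + Formula.countEx ψ
  | .rel _ _ => 0
  | .eq _ _ => 0
  | .fls => 0

def Term.unAddRel1 {a : ℕ} : Term (S.addRel a) → Term S
  | .var n => .var n
  | .app f ts => .app f fun i => Term.unAddRel1 (ts i)

def Term.unAddRelD {a : ℕ} : Term ((S.addRel a).double) → Term S.double
  | .var n => .var n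
  | .app f ts => .app f fun i => Term.unAddRelD (ts i)

def Term.unAddRelDsk {a : ℕ} : Term (((S.addRel a).double).skolemize) → Term (S.double.skolemize)
  | .var n => .var n
  | .app f ts => .app f fun i => Term.unAddRelDsk (ts i)

def Term.inclSk : Term S → Term S.skolemize
  | .var n => .var n
  | .app f ts => .app (Sum.inl f) fun i => Term.inclSk (ts i)

def Formula.inclSk : Formula S → Formula S.skolemize
  | .rel r ts => .rel r fun i => (ts i).inclSk
  | .eq t u => .eq t.inclSk u.inclSk
  | .fls => .fls
  | .not φ => .not (Formula.inclSk φ)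
  | .and φ ψ => .and (Formula.inclSk φ) (Formula.inclSk ψ)
  | .or φ ψ => .or (Formula.inclSk φ) (Formula.inclSk ψ)
  | .all x φ => .all x (Formula.inclSk φ)
  | .ex x φ => .ex x (Formula.inclSk φ)

def Term.inclAddRel {a : ℕ} : Term S → Term (S.addRel a)
  | .var n => .var n
  | .app f ts => .app f fun i => Term.inclAddRel (ts i)

def Formula.inclAddRel {a : ℕ} : Formula S → Formula (S.addRel a)
  | .rel r ts => .rel (some r) fun i => (ts i).inclAddRel
  | .eq t u => .eq t.inclAddRel u.inclAddRel
  | .fls => .fls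
  | .not φ => .not (Formula.inclAddRel φ)
  | .and φ ψ => .and (Formula.inclAddRel φ) (Formula.inclAddRel ψ)
  | .or φ ψ => .or (Formula.inclAddRel φ) (Formula.inclAddRel ψ)
  | .all x φ => .all x (Formula.inclAddRel φ)
  | .ex x φ => .ex x (Formula.inclAddRel φ)

def Term.inclAddRelD {a : ℕ} : Term S.double → Term ((S.addRel a).double)
  | .var n => .var n
  | .app f ts => .app f fun i => Term.inclAddRelD (ts i)

def Formula.inclAddRelD {a : ℕ} : Formula S.double → Formula ((S.addRel a).double)
  | .rel r ts => .rel (some r.1, r.2) fun i => (ts i).inclAddRelD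
  | .eq t u => .eq t.inclAddRelD u.inclAddRelD
  | .fls => .fls
  | .not φ => .not (Formula.inclAddRelD φ)
  | .and φ ψ => .and (Formula.inclAddRelD φ) (Formula.inclAddRelD ψ)
  | .or φ ψ => .or (Formula.inclAddRelD φ) (Formula.inclAddRelD ψ)
  | .all x φ => .all x (Formula.inclAddRelD φ)
  | .ex x φ => .ex x (Formula.inclAddRelD φ)

def Term.inclSkD : Term S.double → Term ((S.skolemize).double)
  | .var n => .var n
  | .app f ts => .app (Sum.inl f.1, f.2) fun i => Term.inclSkD (ts i)

def Formula.inclSkD : Formula S.double → Formula ((S.skolemize).double)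
  | .rel r ts => .rel r fun i => (ts i).inclSkD
  | .eq t u => .eq t.inclSkD u.inclSkD
  | .fls => .fls
  | .not φ => .not (Formula.inclSkD φ)
  | .and φ ψ => .and (Formula.inclSkD φ) (Formula.inclSkD ψ)
  | .or φ ψ => .or (Formula.inclSkD φ) (Formula.inclSkD ψ)
  | .all x φ => .all x (Formula.inclSkD φ)
  | .ex x φ => .ex x (Formula.inclSkD φ)

def Term.toDoubleSk (b : Bool) : Term S.skolemize → Term (S.double.skolemize)
  | .var n => .var n
  | .app (Sum.inl f) ts => .app (Sum.inl (f, b)) fun i => Term.toDoubleSk b (ts i)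
  | .app (Sum.inr s) ts => .app (Sum.inr s) fun i => Term.toDoubleSk b (ts i)

/-- Replace every symbol of `Σ` in a formula over the Skolem-extension of `Σ` by the
copy indicated by `b` (Skolem symbols are shared between the two copies). -/
def Formula.toDoubleSk (b : Bool) : Formula S.skolemize → Formula (S.double.skolemize)
  | .rel r ts => .rel (r, b) fun i => (ts i).toDoubleSk b
  | .eq t u => .eq (t.toDoubleSk b) (u.toDoubleSk b)
  | .fls => .fls
  | .not φ => .not (Formula.toDoubleSk b φ)
  | .and φ ψ => .and (Formula.toDoubleSk b φ) (Formula.toDoubleSk b ψ)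
  | .or φ ψ => .or (Formula.toDoubleSk b φ) (Formula.toDoubleSk b ψ)
  | .all x φ => .all x (Formula.toDoubleSk b φ)
  | .ex x φ => .ex x (Formula.toDoubleSk b φ)

/-- `χ[ψ/r, ψ'/r']`: replace every atom of `r` (resp. `r'`) in the two-vocabulary
formula `χ` over `Σ̂ ⊎ Σ̂'` by `ψ` (resp. `ψ'`), whose free variables `0, …, a-1`
are substituted by the arguments of the atom. -/
def Formula.substRD {a : ℕ} (ψ : Formula S) :
    Formula ((S.addRel a).double) → Formula S.double
  | .rel ⟨none, b⟩ ts => (ψ.toDouble b).substEnv fun n =>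
      if h : n < a then Term.unAddRelD (ts ⟨n, h⟩) else .var n
  | .rel ⟨some r₀, b⟩ ts => .rel (r₀, b) fun i => Term.unAddRelD (ts i)
  | .eq t u => .eq t.unAddRelD u.unAddRelD
  | .fls => .fls
  | .not φ => .not (Formula.substRD ψ φ)
  | .and φ χ => .and (Formula.substRD ψ φ) (Formula.substRD ψ χ)
  | .or φ χ => .or (Formula.substRD ψ φ) (Formula.substRD ψ χ)
  | .all x φ => .all x (Formula.substRD ψ φ)
  | .ex x φ => .ex x (Formula.substRD ψ φ)

/-- `χ[ψ/r]`: replace every atom of `r` in the (one-vocabulary) formula `χ` over `Σ̂`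
by `ψ`, whose free variables `0, …, a-1` are substituted by the arguments of the atom. -/
def Formula.substR1 {a : ℕ} (ψ : Formula S) : Formula (S.addRel a) → Formula S
  | .rel none ts => ψ.substEnv fun n =>
      if h : n < a then Term.unAddRel1 (ts ⟨n, h⟩) else .var n
  | .rel (some r₀) ts => .rel r₀ fun i => Term.unAddRel1 (ts i)
  | .eq t u => .eq t.unAddRel1 u.unAddRel1
  | .fls => .fls
  | .not φ => .not (Formula.substR1 ψ φ)
  | .and φ χ => .and (Formula.substR1 ψ φ) (Formula.substR1 ψ χ)
  | .or φ χ => .or (Formula.substR1 ψ φ) (Formula.substR1 ψ χ)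
  | .all x φ => .all x (Formula.substR1 ψ φ)
  | .ex x φ => .ex x (Formula.substR1 ψ φ)

/-- `χ[ψ/r, ψ'/r']` for formulas over the Skolem-extension of `Σ̂ ⊎ Σ̂'`. -/
def Formula.substRDsk {a : ℕ} (ψ : Formula S) :
    Formula (((S.addRel a).double).skolemize) → Formula (S.double.skolemize)
  | .rel ⟨none, b⟩ ts => ((ψ.toDouble b).inclSk).substEnv fun n =>
      if h : n < a then Term.unAddRelDsk (ts ⟨n, h⟩) else .var n
  | .rel ⟨some r₀, b⟩ ts => .rel (r₀, b) fun i => Term.unAddRelDsk (ts i)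
  | .eq t u => .eq t.unAddRelDsk u.unAddRelDsk
  | .fls => .fls
  | .not φ => .not (Formula.substRDsk ψ φ)
  | .and φ χ => .and (Formula.substRDsk ψ φ) (Formula.substRDsk ψ χ)
  | .or φ χ => .or (Formula.substRDsk ψ φ) (Formula.substRDsk ψ χ)
  | .all x φ => .all x (Formula.substRDsk ψ φ)
  | .ex x φ => .ex x (Formula.substRDsk ψ φ)

/-- `rOcc b φ` holds iff every occurrence of the fresh relation symbol `r` in `φ` has
polarity `b` (`true` = positive, i.e. under an even number of negations in negation
normal form; `false` = negative). -/
def Formula.rOcc {a : ℕ} : Bool → Formula (S.addRel a) → Prop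
  | b, .rel none _ => b = true
  | _, .rel (some _) _ => True
  | _, .eq _ _ => True
  | _, .fls => True
  | b, .not φ => Formula.rOcc (!b) φ
  | b, .and φ ψ => Formula.rOcc b φ ∧ Formula.rOcc b ψ
  | b, .or φ ψ => Formula.rOcc b φ ∧ Formula.rOcc b ψ
  | b, .all _ φ => Formula.rOcc b φ
  | b, .ex _ φ => Formula.rOcc b φ

/-- The relation symbol `r` occurs only positively in `φ`. -/
def Formula.OnlyPosR {a : ℕ} (φ : Formula (S.addRel a)) : Prop := Formula.rOcc true φ

/-- The relation symbol `r` occurs only negatively in `φ`. -/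
def Formula.OnlyNegR {a : ℕ} (φ : Formula (S.addRel a)) : Prop := Formula.rOcc false φ

/-- `δ̂` is a sound instrumentation for `δ` and `ψ`:  `δ → δ̂[ψ/r, ψ'/r']` is valid. -/
def SoundInstr {a : ℕ} (δ : Formula S.double) (ψ : Formula S)
    (δhat : Formula ((S.addRel a).double)) : Prop :=
  Valid (Formula.imp δ (Formula.substRD ψ δhat))

/-- `δ̂` is a sound instrumentation without additional existentials for `δ` and `ψ`:
there is an existential naming `η`, mapping each existentially quantified variable of
`δ̂ = ∃z₁…z_m. φ` to a constant of `Sk(δ)` or of `δ̂`, such that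
`Sk(δ) → η(δ̂)[ψ/r, ψ'/r']` is valid. -/
def SoundInstrNoExists {a : ℕ} (δ : Formula S.double) (ψ : Formula S)
    (δhat : Formula ((S.addRel a).double)) : Prop :=
  ∃ η : ℕ → Term (((S.addRel a).double).skolemize),
    (∀ z ∈ δhat.exPrefix.1,
      IsConstTermOf (S := ((S.addRel a).double).skolemize)
        (((Formula.sk δ).constSyms : Set ((((S.addRel a).double).skolemize).Func)) ∪
          (Formula.inclSk δhat).constSyms)
        (η z)) ∧
    (∀ z, z ∉ δhat.exPrefix.1 → η z = .var z) ∧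
    Valid (Formula.imp (Formula.sk δ)
      (Formula.substRDsk ψ ((Formula.inclSk δhat.exPrefix.2).substEnv η)))

/-- The interpretation in `A` of the constant symbol `f` (over a relational signature). -/
def constVal (hrel : S.Relational) (A : Struc S) (f : S.Func) : A.Dom :=
  A.interpFunc f fun i => (Fin.cast (hrel f) i).elim0

/-- The substructure of `A` whose domain is the set of interpretations of the
constant symbols. -/
def constSub (hrel : S.Relational) (A : Struc S) [Nonempty S.Func] : Struc S where
  Dom := ↥(Set.range (constVal hrel A))
  dom_nonempty := (Set.range_nonempty _).to_subtype
  interpFunc := fun f _ => ⟨constVal hrel A f, Set.mem_range_self f⟩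
  interpRel := fun r args => A.interpRel r fun i => (args i).1

end BH

/-!
Under the defining axiom `∀x̄. r(x̄) ↔ ∃ȳ. φ(x̄, ȳ)`, the atom `r(t̄)` yields witnesses `c̄`
for `φ(t̄, c̄)`, and if `r(t̄)` fails, `r(t̄) → φ(t̄, c̄)` holds for any `c̄`; so the local
instantiation follows from the definition of `r`. Soundness is the same fact read in the
expansion of a `Σ ⊎ Σ'`-structure that interprets `r` by `ψ` and `r'` by `ψ'`: there
`χ[ψ/r, ψ'/r']` and `χ` mean the same, provided the arguments of the `r`-atoms of `χ` are
ground, so that substituting them into `ψ` captures no variable.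
-/

namespace BH

variable {S : Sig}

section Semantics

theorem Term.eval_congr {A : Struc S} {v w : ℕ → A.Dom} {t : Term S}
    (h : ∀ n ∈ t.fvars, v n = w n) : t.eval A v = t.eval A w := by
  induction t with
  | var n => exact h n rfl
  | app f ts ih =>
    exact congrArg _ <| funext fun i => ih i fun n hn => h n (Set.mem_iUnion.2 ⟨i, hn⟩)

theorem Term.eval_ground {A : Struc S} {t : Term S} (h : t.IsGround) (v w : ℕ → A.Dom) :
    t.eval A v = t.eval A w := by
  induction t with
  | var n => exact h.elim
  | app f ts ih => exact congrArg _ (funext fun i => ih i (h i))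

theorem constTerm_isGround (f : S.Func) (h : S.funcArity f = 0) : (constTerm f h).IsGround :=
  fun i => (Fin.cast h i).elim0

theorem Formula.realize_congr {A : Struc S} {φ : Formula S} :
    ∀ {v w : ℕ → A.Dom}, (∀ n ∈ φ.fvars, v n = w n) →
    (φ.Realize A v ↔ φ.Realize A w) := by
  induction φ with
  | rel r ts =>
    intro v w h
    exact iff_of_eq <| congrArg _ <| funext fun i =>
      Term.eval_congr fun n hn => h n (Set.mem_iUnion.2 ⟨i, hn⟩)
  | eq t u =>
    intro v w h
    exact iff_of_eq <| congrArg₂ (· = ·) (Term.eval_congr fun n hn => h n (Or.inl hn))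
      (Term.eval_congr fun n hn => h n (Or.inr hn))
  | fls => exact fun _ => Iff.rfl
  | not φ ih => exact fun h => not_congr (ih h)
  | and φ χ ihφ ihχ =>
    exact fun h => and_congr (ihφ fun n hn => h n (Or.inl hn)) (ihχ fun n hn => h n (Or.inr hn))
  | or φ χ ihφ ihχ =>
    exact fun h => or_congr (ihφ fun n hn => h n (Or.inl hn)) (ihχ fun n hn => h n (Or.inr hn))
  | all x φ ih =>
    intro v w h
    refine forall_congr' fun d => ih fun n hn => ?_
    rcases eq_or_ne n x with rfl | hnx
    · simp
    · simp only [Function.update_of_ne hnx]; exact h n ⟨hn, hnx⟩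
  | ex x φ ih =>
    intro v w h
    refine exists_congr fun d => ih fun n hn => ?_
    rcases eq_or_ne n x with rfl | hnx
    · simp
    · simp only [Function.update_of_ne hnx]; exact h n ⟨hn, hnx⟩

theorem Formula.realize_exList_of_realize {A : Struc S} {χ : Formula S} :
    ∀ {ys : List ℕ} {v : ℕ → A.Dom}, χ.Realize A v → (Formula.exList ys χ).Realize A v
  | [], _, h => h
  | y :: _, v, h => ⟨v y, by rw [Function.update_eq_self]; exact realize_exList_of_realize h⟩

theorem Formula.realize_exList_mono {A : Struc S} {χ χ' : Formula S}
    (h : ∀ v : ℕ → A.Dom, χ.Realize A v → χ'.Realize A v) :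
    ∀ {ys : List ℕ} {v : ℕ → A.Dom},
      (Formula.exList ys χ).Realize A v → (Formula.exList ys χ').Realize A v
  | [], v, hv => h v hv
  | _ :: _, _, ⟨d, hd⟩ => ⟨d, realize_exList_mono h hd⟩

theorem Formula.realize_allList {A : Struc S} (χ : Formula S) :
    ∀ (xs : List ℕ) (v : ℕ → A.Dom),
    (Formula.allList xs χ).Realize A v ↔
      ∀ v' : ℕ → A.Dom, (∀ n, n ∉ xs → v' n = v n) → χ.Realize A v' := by
  intro xs
  induction xs with
  | nil =>
    refine fun v => ⟨fun h v' hv' => ?_, fun h => h v fun _ _ => rfl⟩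
    exact (Formula.realize_congr fun n _ => hv' n List.not_mem_nil).2 h
  | cons x xs ih =>
    intro v
    simp only [Formula.allList, Formula.Realize]
    constructor
    · intro H v' hv'
      refine (ih _).1 (H (v' x)) v' fun n hn => ?_
      rcases eq_or_ne n x with rfl | hnx
      · simp
      · rw [Function.update_of_ne hnx]; exact hv' n (by simp [hnx, hn])
    · intro H d
      refine (ih _).2 fun v' hv' => H v' fun n hn => ?_
      have hnx : n ≠ x := by rintro rfl; exact hn (.head _)
      rw [hv' n fun h => hn (.tail _ h), Function.update_of_ne hnx]

theorem Formula.realize_imp {A : Struc S} {v : ℕ → A.Dom} {φ χ : Formula S} :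
    (φ.imp χ).Realize A v ↔ (φ.Realize A v → χ.Realize A v) :=
  imp_iff_not_or.symm

theorem Formula.realize_iff {A : Struc S} {v : ℕ → A.Dom} {φ χ : Formula S} :
    (φ.iff χ).Realize A v ↔ (φ.Realize A v ↔ χ.Realize A v) :=
  (and_congr realize_imp realize_imp).trans iff_iff_implies_and_implies.symm

end Semantics

section Substitution

theorem Term.eval_substEnv {A : Struc S} (σ : ℕ → Term S) (t : Term S) (v : ℕ → A.Dom) :
    (t.substEnv σ).eval A v = t.eval A fun n => (σ n).eval A v := by
  induction t with
  | var n => rfl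
  | app f ts ih => exact congrArg _ (funext ih)

/-- Substitutions under which `Formula.substEnv` cannot capture a variable. -/
def GoodEnv (σ : ℕ → Term S) : Prop := ∀ n, (σ n).IsGround ∨ σ n = .var n

theorem GoodEnv.update {σ : ℕ → Term S} (hσ : GoodEnv σ) (x : ℕ) :
    GoodEnv (Function.update σ x (.var x)) := fun n => by
  rcases eq_or_ne n x with rfl | hnx
  · simp
  · rw [Function.update_of_ne hnx]; exact hσ n

theorem GoodEnv.eval_update {A : Struc S} {σ : ℕ → Term S} (hσ : GoodEnv σ) (x : ℕ)
    (d : A.Dom) (v : ℕ → A.Dom) :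
    (fun n => (Function.update σ x (.var x) n).eval A (Function.update v x d)) =
      Function.update (fun n => (σ n).eval A v) x d := by
  funext n
  rcases eq_or_ne n x with rfl | hnx
  · simp [Term.eval]
  · simp only [Function.update_of_ne hnx]
    rcases hσ n with hg | hv
    · exact Term.eval_ground hg _ _
    · rw [hv]; exact Function.update_of_ne hnx d v

def extendEnv {α : Type*} {a : ℕ} (args : Fin a → α) (v : ℕ → α) : ℕ → α :=
  fun n => if h : n < a then args ⟨n, h⟩ else v n

theorem extendEnv_of_lt {α : Type*} {a n : ℕ} (args : Fin a → α) (v : ℕ → α)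
    (h : n < a) :
    extendEnv args v n = args ⟨n, h⟩ :=
  dif_pos h

theorem extendEnv_of_not_lt {α : Type*} {a n : ℕ} (args : Fin a → α) (v : ℕ → α)
    (h : ¬n < a) :
    extendEnv args v n = v n :=
  dif_neg h

theorem goodEnv_extendEnv {a : ℕ} {ts : Fin a → Term S} (hts : ∀ i, (ts i).IsGround) :
    GoodEnv (extendEnv ts Term.var) := fun n =>
  if h : n < a then .inl (extendEnv_of_lt ts _ h ▸ hts _) else .inr (extendEnv_of_not_lt ts _ h)

theorem Formula.realize_substEnv {A : Struc S} {φ : Formula S} :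
    ∀ {σ : ℕ → Term S}, GoodEnv σ → ∀ v : ℕ → A.Dom,
    ((φ.substEnv σ).Realize A v ↔ φ.Realize A fun n => (σ n).eval A v) := by
  induction φ with
  | rel r ts =>
    intro σ _ v
    exact iff_of_eq <| congrArg _ <| funext fun i => Term.eval_substEnv σ (ts i) v
  | eq t u =>
    intro σ _ v
    exact iff_of_eq <| congrArg₂ (· = ·) (Term.eval_substEnv σ t v) (Term.eval_substEnv σ u v)
  | fls => exact fun _ _ => Iff.rfl
  | not φ ih => exact fun hσ v => not_congr (ih hσ v)
  | and φ χ ihφ ihχ => exact fun hσ v => and_congr (ihφ hσ v) (ihχ hσ v)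
  | or φ χ ihφ ihχ => exact fun hσ v => or_congr (ihφ hσ v) (ihχ hσ v)
  | all x φ ih =>
    intro σ hσ v
    exact forall_congr' fun d => by rw [ih (hσ.update x), hσ.eval_update]
  | ex x φ ih =>
    intro σ hσ v
    exact exists_congr fun d => by rw [ih (hσ.update x), hσ.eval_update]

theorem Formula.substEnv_exList (σ : ℕ → Term S) (φ : Formula S) :
    ∀ {ys : List ℕ}, (∀ y ∈ ys, σ y = .var y) →
    (Formula.exList ys φ).substEnv σ = Formula.exList ys (φ.substEnv σ)
  | [], _ => rfl
  | y :: ys, h => by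
    have hy : Function.update σ y (.var y) = σ := by
      rw [← h y (.head _), Function.update_eq_self]
    change Formula.ex y _ = Formula.ex y _
    rw [hy, substEnv_exList σ φ fun z hz => h z (.tail _ hz)]

end Substitution

section Embeddings

theorem Formula.toDouble_exList (b : Bool) (ys : List ℕ) (φ : Formula S) :
    (Formula.exList ys φ).toDouble b = Formula.exList ys (φ.toDouble b) := by
  induction ys with
  | nil => rfl
  | cons y ys ih => exact congrArg (Formula.ex y) ih

theorem Formula.inclAddRel_exList {a : ℕ} (ys : List ℕ) (φ : Formula S) :
    (Formula.exList ys φ).inclAddRel (a := a) = Formula.exList ys φ.inclAddRel := by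
  induction ys with
  | nil => rfl
  | cons y ys ih => exact congrArg (Formula.ex y) ih

theorem Term.toDouble_inclAddRel {a : ℕ} (b : Bool) (t : Term S) :
    (Term.inclAddRel (a := a) t).toDouble b = (t.toDouble b).inclAddRelD := by
  induction t with
  | var n => rfl
  | app f ts ih => exact congrArg _ (funext ih)

theorem Formula.toDouble_inclAddRel {a : ℕ} (b : Bool) (φ : Formula S) :
    (Formula.inclAddRel (a := a) φ).toDouble b = (φ.toDouble b).inclAddRelD := by
  induction φ with
  | rel r ts => exact congrArg _ (funext fun i => Term.toDouble_inclAddRel b (ts i))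
  | eq t u =>
    exact congrArg₂ Formula.eq (Term.toDouble_inclAddRel b t) (Term.toDouble_inclAddRel b u)
  | fls => rfl
  | not φ ih => exact congrArg _ ih
  | and φ χ ihφ ihχ => exact congrArg₂ Formula.and ihφ ihχ
  | or φ χ ihφ ihχ => exact congrArg₂ Formula.or ihφ ihχ
  | all x φ ih => exact congrArg (Formula.all x) ih
  | ex x φ ih => exact congrArg (Formula.ex x) ih

theorem Term.fvars_toDouble (b : Bool) (t : Term S) : (t.toDouble b).fvars = t.fvars := by
  induction t with
  | var n => rfl
  | app f ts ih => exact Set.iUnion_congr ih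

theorem Formula.fvars_toDouble (b : Bool) (φ : Formula S) :
    (φ.toDouble b).fvars = φ.fvars := by
  induction φ with
  | rel r ts => exact Set.iUnion_congr fun i => Term.fvars_toDouble b (ts i)
  | eq t u => exact congrArg₂ (· ∪ ·) (Term.fvars_toDouble b t) (Term.fvars_toDouble b u)
  | fls => rfl
  | not φ ih => exact ih
  | and φ χ ihφ ihχ => exact congrArg₂ (· ∪ ·) ihφ ihχ
  | or φ χ ihφ ihχ => exact congrArg₂ (· ∪ ·) ihφ ihχ
  | all x φ ih => exact congrArg (· \ {x}) ih
  | ex x φ ih => exact congrArg (· \ {x}) ih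

end Embeddings

section Instrumentation

variable {a : ℕ}

/-- The defining axiom `∀x̄. r(x̄) ↔ ψ(x̄)` of the unprimed copy of `r`. -/
def defAxiom (ψ : Formula S) : Formula (S.addRel a).double :=
  Formula.allList (List.range a)
    (Formula.iff (.rel (none, false) fun i => .var i.val) ((ψ.inclAddRel).toDouble false))

/-- The local instantiation `∃c̄. (r(t̄) → φ(t̄, c̄))`, with the variables `ys` in the role
of `c̄`. -/
def localInst (ys : List ℕ) (φ : Formula S) (ts : Fin a → Term (S.addRel a).double) :
    Formula (S.addRel a).double :=
  Formula.exList ys <| Formula.imp (.rel (none, false) fun i => ts i)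
    (((φ.inclAddRel).toDouble false).substEnv (extendEnv ts Term.var))

/-- The expansion of a `Σ ⊎ Σ'`-structure interpreting `r` by `ψ` and `r'` by `ψ'`.
The variables of `ψ` outside `0, …, a-1` receive an arbitrary value. -/
def Struc.expandDef (ψ : Formula S) (A : Struc S.double) : Struc (S.addRel a).double where
  Dom := A.Dom
  interpFunc := A.interpFunc
  interpRel
    | (none, b), args => (ψ.toDouble b).Realize A (extendEnv args fun _ => Classical.arbitrary _)
    | (some r, b), args => A.interpRel (r, b) args

def Formula.GroundRArgs : Formula (S.addRel a).double → Prop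
  | .rel (none, _) ts => ∀ i, (ts i).IsGround
  | .rel (some _, _) _ => True
  | .eq _ _ => True
  | .fls => True
  | .not φ => φ.GroundRArgs
  | .and φ χ => φ.GroundRArgs ∧ χ.GroundRArgs
  | .or φ χ => φ.GroundRArgs ∧ χ.GroundRArgs
  | .all _ φ => φ.GroundRArgs
  | .ex _ φ => φ.GroundRArgs

theorem Formula.groundRArgs_inclAddRelD (χ : Formula S.double) :
    (χ.inclAddRelD (a := a)).GroundRArgs := by
  induction χ with
  | and _ _ ihφ ihχ | or _ _ ihφ ihχ => exact ⟨ihφ, ihχ⟩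
  | not _ ih | all _ _ ih | ex _ _ ih => exact ih
  | _ => trivial

theorem Formula.groundRArgs_inclAddRelD_substEnv (χ : Formula S.double) :
    ∀ σ : ℕ → Term (S.addRel a).double, ((χ.inclAddRelD).substEnv σ).GroundRArgs := by
  induction χ with
  | and _ _ ihφ ihχ | or _ _ ihφ ihχ => exact fun σ => ⟨ihφ σ, ihχ σ⟩
  | not _ ih => exact ih
  | all _ _ ih | ex _ _ ih => exact fun _ => ih _
  | _ => exact fun _ => trivial

theorem Formula.groundRArgs_localInst (ys : List ℕ) (φ : Formula S)
    {ts : Fin a → Term (S.addRel a).double} (hts : ∀ i, (ts i).IsGround) :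
    (localInst ys φ ts).GroundRArgs := by
  have hbody := And.intro hts <|
    groundRArgs_inclAddRelD_substEnv (φ.toDouble false) (extendEnv ts Term.var)
  rw [← toDouble_inclAddRel] at hbody
  induction ys with
  | nil => exact hbody
  | cons _ _ ih => exact ih

theorem Term.IsGround.unAddRelD {t : Term (S.addRel a).double} (h : t.IsGround) :
    t.unAddRelD.IsGround := by
  induction t with
  | var n => exact h.elim
  | app f ts ih => exact fun i => ih i (h i)

theorem Term.eval_unAddRelD (ψ : Formula S) (A : Struc S.double) (v : ℕ → A.Dom)
    (t : Term (S.addRel a).double) : t.unAddRelD.eval A v = t.eval (A.expandDef ψ) v := by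
  induction t with
  | var n => rfl
  | app f ts ih => exact congrArg (A.interpFunc f) (funext ih)

theorem Term.eval_inclAddRelD (ψ : Formula S) (A : Struc S.double) (v : ℕ → A.Dom)
    (t : Term S.double) : (t.inclAddRelD (a := a)).eval (A.expandDef ψ) v = t.eval A v := by
  induction t with
  | var n => rfl
  | app f ts ih => exact congrArg (A.interpFunc f) (funext ih)

theorem Formula.realize_inclAddRelD (ψ : Formula S) (A : Struc S.double) (χ : Formula S.double) :
    ∀ v : ℕ → A.Dom,
      (χ.inclAddRelD (a := a)).Realize (A.expandDef ψ) v ↔ χ.Realize A v := by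
  induction χ with
  | rel r ts =>
    exact fun v => iff_of_eq <| congrArg _ <| funext fun i => Term.eval_inclAddRelD ψ A v (ts i)
  | eq t u =>
    exact fun v => iff_of_eq <|
      congrArg₂ (· = ·) (Term.eval_inclAddRelD ψ A v t) (Term.eval_inclAddRelD ψ A v u)
  | fls => exact fun _ => Iff.rfl
  | not φ ih => exact fun v => not_congr (ih v)
  | and φ χ ihφ ihχ => exact fun v => and_congr (ihφ v) (ihχ v)
  | or φ χ ihφ ihχ => exact fun v => or_congr (ihφ v) (ihχ v)
  | all x φ ih => exact fun v => forall_congr' fun d => ih _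
  | ex x φ ih => exact fun v => exists_congr fun d => ih _

theorem Formula.realize_substRD {ψ : Formula S} (hψ : ψ.fvars ⊆ {n | n < a})
    (A : Struc S.double) {χ : Formula (S.addRel a).double} (hχ : χ.GroundRArgs) :
    ∀ v : ℕ → A.Dom,
      (Formula.substRD ψ χ).Realize A v ↔ χ.Realize (A.expandDef ψ) v := by
  induction χ with
  | rel r ts =>
    obtain ⟨_ | r, b⟩ := r
    · intro v
      change ((ψ.toDouble b).substEnv (extendEnv (fun i => (ts i).unAddRelD) Term.var)).Realize A v
        ↔ (ψ.toDouble b).Realize A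
          (extendEnv (fun i => (ts i).eval (A.expandDef ψ) v) fun _ => Classical.arbitrary _)
      refine (realize_substEnv (goodEnv_extendEnv fun i => (hχ i).unAddRelD) v).trans
        (realize_congr fun n hn => ?_)
      have hn : n < a := hψ (fvars_toDouble b ψ ▸ hn)
      exact (congrArg (Term.eval A v) (extendEnv_of_lt _ _ hn)).trans <|
        (Term.eval_unAddRelD ψ A v _).trans
          (extendEnv_of_lt (fun i => (ts i).eval (A.expandDef ψ) v) _ hn).symm
    · exact fun v => iff_of_eq <| congrArg _ <| funext fun i => Term.eval_unAddRelD ψ A v (ts i)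
  | eq t u =>
    exact fun v => iff_of_eq <|
      congrArg₂ (· = ·) (Term.eval_unAddRelD ψ A v t) (Term.eval_unAddRelD ψ A v u)
  | fls => exact fun _ => Iff.rfl
  | not φ ih => exact fun v => not_congr (ih hχ v)
  | and φ χ ihφ ihχ => exact fun v => and_congr (ihφ hχ.1 v) (ihχ hχ.2 v)
  | or φ χ ihφ ihχ => exact fun v => or_congr (ihφ hχ.1 v) (ihχ hχ.2 v)
  | all x φ ih => exact fun v => forall_congr' fun d => ih hχ _
  | ex x φ ih => exact fun v => exists_congr fun d => ih hχ _

theorem realize_defAxiom_expandDef {ψ : Formula S} (hψ : ψ.fvars ⊆ {n | n < a})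
    (A : Struc S.double) (v : ℕ → A.Dom) :
    (defAxiom ψ).Realize (A.expandDef (a := a) ψ) v := by
  refine (Formula.realize_allList _ _ _).2 fun (w : ℕ → A.Dom) _ => Formula.realize_iff.2 ?_
  have hrw : (Formula.rel (S := (S.addRel a).double) (none, false) fun i => .var i.val).Realize
      (A.expandDef ψ) w ↔ (ψ.toDouble false).Realize A w :=
    Formula.realize_congr fun n hn =>
      extendEnv_of_lt _ _ (hψ (Formula.fvars_toDouble false ψ ▸ hn))
  rw [hrw, Formula.toDouble_inclAddRel, Formula.realize_inclAddRelD]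

theorem soundInstr_of_valid_defAxiom_imp {δ : Formula S.double} {ψ : Formula S}
    {δhat : Formula (S.addRel a).double} (hψ : ψ.fvars ⊆ {n | n < a})
    (hδhat : δhat.GroundRArgs)
    (h : Valid (Formula.imp (Formula.and (defAxiom ψ) δ.inclAddRelD) δhat)) :
    SoundInstr δ ψ δhat := fun A v =>
  not_or_of_imp fun hδ => (Formula.realize_substRD hψ A hδhat v).2 <|
    (h (A.expandDef ψ) v).resolve_left <| not_not.2
      ⟨realize_defAxiom_expandDef hψ A v, (Formula.realize_inclAddRelD ψ A δ v).2 hδ⟩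

theorem realize_localInst_of_realize_defAxiom {ys : List ℕ} (hys : ∀ y ∈ ys, a ≤ y)
    {φ : Formula S} {ts : Fin a → Term (S.addRel a).double} (hts : ∀ i, (ts i).IsGround)
    {A : Struc (S.addRel a).double} {v : ℕ → A.Dom}
    (hdef : (defAxiom (Formula.exList ys φ)).Realize A v) :
    (localInst ys φ ts).Realize A v := by
  set σ := extendEnv ts Term.var
  by_cases hr : (Formula.rel (S := (S.addRel a).double) (none, false) fun i => ts i).Realize A v
  · have hdef_ts := (Formula.realize_allList _ _ _).1 hdef (fun n => (σ n).eval A v)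
      fun n hn => congrArg (Term.eval A v)
        (extendEnv_of_not_lt ts _ fun h => hn (List.mem_range.2 h))
    have hr_σ : (Formula.rel (S := (S.addRel a).double) (none, false) fun i => .var i.val).Realize
        A (fun n => (σ n).eval A v) := by
      have hargs : (fun i : Fin a => (σ i).eval A v) = fun i => (ts i).eval A v :=
        funext fun i => congrArg (Term.eval A v) (extendEnv_of_lt ts _ i.isLt)
      change A.interpRel (none, false) fun i : Fin a => (σ i).eval A v
      exact hargs ▸ hr
    have hψ_ts := (Formula.realize_iff.1 hdef_ts).1 hr_σ
    rw [← Formula.realize_substEnv (goodEnv_extendEnv hts), Formula.inclAddRel_exList,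
      Formula.toDouble_exList, Formula.substEnv_exList σ _ fun y hy =>
        extendEnv_of_not_lt ts _ (Nat.not_lt.2 (hys y hy))] at hψ_ts
    exact Formula.realize_exList_mono (fun _ => Or.inr) hψ_ts
  · exact Formula.realize_exList_of_realize (Or.inl hr)

end Instrumentation

/-- soundness of local instantiations. -/
theorem statement_10 (S : Sig) (a : ℕ) (hrel : S.Relational)
    (ys : List ℕ) (hys : ∀ y ∈ ys, a ≤ y)
    (φ0 : Formula S) (hφ0 : φ0.IsQF)
    (ψ : Formula S) (hψ : ψ = Formula.exList ys φ0) (hψfv : ψ.fvars ⊆ {n | n < a})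
    (δ0 : Formula S.double) (hδ : δ0.IsSentence)
    (cs : Fin a → Term ((S.addRel a).double))
    (hcs : ∀ i, ∃ (f : ((S.addRel a).double).Func)
      (h : ((S.addRel a).double).funcArity f = 0), cs i = constTerm f h) :
    let δ : Formula ((S.addRel a).double) := Formula.inclAddRelD δ0
    let σa : ℕ → Term ((S.addRel a).double) :=
      fun n => if h : n < a then cs ⟨n, h⟩ else .var n
    let body : Formula ((S.addRel a).double) :=
      Formula.imp (.rel (none, false) fun i => cs i)
        (((φ0.inclAddRel).toDouble false).substEnv σa)
    let δhat : Formula ((S.addRel a).double) := Formula.and δ (Formula.exList ys body)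
    SoundInstr δ0 ψ δhat ∧
      Valid (Formula.imp
        (Formula.and
          (Formula.allList (List.range a)
            (Formula.iff (.rel (none, false) fun i => .var i.val)
              ((ψ.inclAddRel).toDouble false)))
          δ)
        δhat) := by
  intro δ σa body δhat
  subst hψ
  have hcs_ground : ∀ i, (cs i).IsGround := fun i => by
    obtain ⟨f, h, hf⟩ := hcs i
    exact hf ▸ constTerm_isGround f h
  have hvalid : Valid (Formula.imp (Formula.and (defAxiom (Formula.exList ys φ0)) δ) δhat) :=
    fun A v => not_or_of_imp fun ⟨hdef, hδ⟩ =>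
      ⟨hδ, realize_localInst_of_realize_defAxiom hys hcs_ground hdef⟩
  have hδhat : δhat.GroundRArgs :=
    ⟨Formula.groundRArgs_inclAddRelD δ0, Formula.groundRArgs_localInst ys φ0 hcs_ground⟩
  exact ⟨soundInstr_of_valid_defAxiom_imp hψfv hδhat hvalid, hvalid⟩

end BH
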